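/- arXiv:1707.08017 — 11 statements merged into one kernel-verified Lean document; each statement's English description precedes it below -/
import Mathlib

section
/- If ⊢ is a non-permeable consequence relation on a set L, then every sound and complete intersective mixed semantics for ⊢ is polarized: some member λ of the family satisfies D_p^λ ∩ D_c^λ ≠ ∅ (T-polarization) and some member λ satisfies V \ (D_p^λ ∪ D_c^λ) ≠ ∅ (F-polarization). -/
universe u v w x

/-- Mixed truth-relation. -/
def Mixed {V : Type*} (Dp Dc : Set V) (γ δ : Set V) : Prop :=
  γ ⊆ Dp → (δ ∩ Dc).Nonempty

def Monotonic {L : Type*} (Cons : Set L → Set L → Prop) : Prop :=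
  ∀ ⦃Γ₁ Γ₂ Δ₁ Δ₂ : Set L⦄, Γ₁ ⊆ Γ₂ → Δ₁ ⊆ Δ₂ → Cons Γ₁ Δ₁ → Cons Γ₂ Δ₂

def ReflRel {L : Type*} (Cons : Set L → Set L → Prop) : Prop :=
  ∀ F : L, Cons {F} {F}

def TransRel {L : Type*} (Cons : Set L → Set L → Prop) : Prop :=
  ∀ Γ Δ : Set L, ¬ Cons Γ Δ →
    ∃ Γ' Δ' : Set L, Γ ⊆ Γ' ∧ Δ ⊆ Δ' ∧ ¬ Cons Γ' Δ' ∧ Γ' ∪ Δ' = Set.univ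

def LRPermeable {L : Type*} (Cons : Set L → Set L → Prop) : Prop :=
  ∀ Γ Δ S : Set L, Cons (Γ ∪ S) Δ → Cons Γ (S ∪ Δ)

def RLPermeable {L : Type*} (Cons : Set L → Set L → Prop) : Prop :=
  ∀ Γ Δ S : Set L, Cons Γ (S ∪ Δ) → Cons (Γ ∪ S) Δ

def Permeable {L : Type*} (Cons : Set L → Set L → Prop) : Prop :=
  LRPermeable Cons ∨ RLPermeable Cons

def CompactRel {L : Type*} (Cons : Set L → Set L → Prop) : Prop :=
  ∀ Γ Δ : Set L, Cons Γ Δ →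
    ∃ Γ' Δ' : Set L, Γ' ⊆ Γ ∧ Δ' ⊆ Δ ∧ Γ'.Finite ∧ Δ'.Finite ∧ Cons Γ' Δ'

/-- Sound and complete intersective mixed semantics. -/
def IsIMS {L V W Λ : Type*} (Cons : Set L → Set L → Prop)
    (interp : L → W → V) (Dp Dc : Λ → Set V) : Prop :=
  ∀ Γ Δ : Set L, Cons Γ Δ ↔
    ∀ (w : W) (l : Λ), Mixed (Dp l) (Dc l)
      ((fun F => interp F w) '' Γ) ((fun F => interp F w) '' Δ)

/-- Sound and complete mixed semantics (single pair). -/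
def IsMixedSem {L V W : Type*} (Cons : Set L → Set L → Prop)
    (interp : L → W → V) (Dp Dc : Set V) : Prop :=
  ∀ Γ Δ : Set L, Cons Γ Δ ↔
    ∀ w : W, Mixed Dp Dc ((fun F => interp F w) '' Γ) ((fun F => interp F w) '' Δ)

/-- Formulae of a sentential language. -/
inductive Formula (A : Type u) (C : Type u) (ar : C → ℕ) : Type u
  | atom : A → Formula A C ar
  | conn : (c : C) → (Fin (ar c) → Formula A C ar) → Formula A C ar

/-- Substitution induced by a map from atoms to formulae. -/
def Formula.subst {A C : Type u} {ar : C → ℕ} (σ : A → Formula A C ar) :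
    Formula A C ar → Formula A C ar
  | .atom a => σ a
  | .conn c Fs => .conn c (fun i => (Fs i).subst σ)

def SubstInvariant {A C : Type u} {ar : C → ℕ}
    (Cons : Set (Formula A C ar) → Set (Formula A C ar) → Prop) : Prop :=
  ∀ (σ : A → Formula A C ar) (Γ Δ : Set (Formula A C ar)),
    Cons Γ Δ → Cons (Formula.subst σ '' Γ) (Formula.subst σ '' Δ)

/-- Evaluation of formulae from truth-functions and a valuation. -/
def evalF {A C : Type u} {ar : C → ℕ} {V : Type v}
    (tf : (c : C) → (Fin (ar c) → V) → V) (v : A → V) : Formula A C ar → V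
  | .atom a => v a
  | .conn c Fs => tf c (fun i => evalF tf v (Fs i))

/-- Truth-functionality of an interpretation w.r.t. truth-functions. -/
def Compositional {A C : Type u} {ar : C → ℕ} {V : Type v} {W : Type w}
    (interp : Formula A C ar → W → V)
    (tf : (c : C) → (Fin (ar c) → V) → V) : Prop :=
  ∀ (c : C) (Fs : Fin (ar c) → Formula A C ar) (w : W),
    interp (Formula.conn c Fs) w = tf c (fun i => interp (Fs i) w)

/-- Regular connectives. -/
def RegularRel {A C : Type u} {ar : C → ℕ}
    (Cons : Set (Formula A C ar) → Set (Formula A C ar) → Prop) : Prop :=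
  ∀ c : C, ∃ Bp Bc : Set (Set (Fin (ar c)) × Set (Fin (ar c))),
    ∀ (Γ Δ : Set (Formula A C ar)) (Fs : Fin (ar c) → Formula A C ar),
      (Cons (Γ ∪ {Formula.conn c Fs}) Δ ↔
        ∀ B ∈ Bp, Cons (Γ ∪ Fs '' B.1) (Fs '' B.2 ∪ Δ)) ∧
      (Cons Γ ({Formula.conn c Fs} ∪ Δ) ↔
        ∀ B ∈ Bc, Cons (Γ ∪ Fs '' B.1) (Fs '' B.2 ∪ Δ))

/-- every sound and complete intersective mixed semantics for a
non-permeable consequence relation is polarized. -/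
theorem statement_0 {L : Type u} (Cons : Set L → Set L → Prop)
    (hnp : ¬ Permeable Cons)
    {V : Type v} {W : Type w} {Λ : Type x}
    (interp : L → W → V) (Dp Dc : Λ → Set V)
    (h : IsIMS Cons interp Dp Dc) :
    (∃ l : Λ, (Dp l ∩ Dc l).Nonempty) ∧
    (∃ l : Λ, ((Dp l ∪ Dc l)ᶜ : Set V).Nonempty) := by
  constructor
  · -- T-polarization: otherwise Cons is RL-permeable
    by_contra hc
    push_neg at hc
    apply hnp
    right
    intro Γ Δ S hGSD
    rw [h] at hGSD ⊢
    intro w l hsub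
    rw [Set.image_union] at hsub
    have hΓ : (fun F => interp F w) '' Γ ⊆ Dp l := (Set.union_subset_iff.mp hsub).1
    have hS : (fun F => interp F w) '' S ⊆ Dp l := (Set.union_subset_iff.mp hsub).2
    obtain ⟨x, hx, hxc⟩ := hGSD w l hΓ
    rw [Set.image_union] at hx
    rcases hx with hx | hx
    · have hmem : x ∈ Dp l ∩ Dc l := ⟨hS hx, hxc⟩
      rw [hc l] at hmem
      exact hmem.elim
    · exact ⟨x, hx, hxc⟩
  · -- F-polarization: otherwise Cons is LR-permeable
    by_contra hc
    push_neg at hc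
    apply hnp
    left
    intro Γ Δ S hGSD
    rw [h] at hGSD ⊢
    intro w l hΓ
    by_cases hS : (fun F => interp F w) '' S ⊆ Dp l
    · obtain ⟨x, hx, hxc⟩ := hGSD w l (by rw [Set.image_union]; exact Set.union_subset hΓ hS)
      exact ⟨x, by rw [Set.image_union]; exact Or.inr hx, hxc⟩
    · obtain ⟨x, hx, hxp⟩ := Set.not_subset.mp hS
      have : x ∈ Dc l := by
        have hfull : Dp l ∪ Dc l = Set.univ := by
          have := hc l
          rwa [Set.compl_empty_iff] at this
        rcases (hfull ▸ Set.mem_univ x : x ∈ Dp l ∪ Dc l) with h' | h'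
        · exact absurd h' hxp
        · exact h'
      exact ⟨x, by rw [Set.image_union]; exact Or.inl hx, this⟩
end

section
/- A consequence relation ⊢ on a sentential language is substitution-invariant if and only if it has a strong semantics (valuational, truth-functional for every connective, and truth-relationally sound and complete). -/
universe u v w x

lemma evalF_conn_eq_subst {A C : Type u} {ar : C → ℕ}
    (v : A → Formula A C ar) (F : Formula A C ar) :
    evalF (fun c Fs => Formula.conn c Fs) v F = F.subst v := by
  induction F with
  | atom a => rfl
  | conn c Fs ih => simp only [evalF, Formula.subst]; exact congrArg _ (funext ih)

lemma subst_atom {A C : Type u} {ar : C → ℕ} (F : Formula A C ar) :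
    F.subst Formula.atom = F := by
  induction F with
  | atom a => rfl
  | conn c Fs ih => simp only [Formula.subst]; exact congrArg _ (funext ih)

lemma evalF_subst {A C : Type u} {ar : C → ℕ} {V : Type u}
    (tf : (c : C) → (Fin (ar c) → V) → V) (v : A → V)
    (σ : A → Formula A C ar) (F : Formula A C ar) :
    evalF tf v (F.subst σ) = evalF tf (fun a => evalF tf v (σ a)) F := by
  induction F with
  | atom a => rfl
  | conn c Fs ih => simp only [Formula.subst, evalF]; exact congrArg _ (funext ih)

/-- substitution-invariance is equivalent to the existence of a
strong semantics (valuational, truth-functional, truth-relationally sound and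
complete). -/
theorem statement_1 {A C : Type u} (ar : C → ℕ)
    (Cons : Set (Formula A C ar) → Set (Formula A C ar) → Prop) :
    SubstInvariant Cons ↔
      ∃ (V : Type u) (tf : (c : C) → (Fin (ar c) → V) → V)
        (TR : Set V → Set V → Prop),
        ∀ Γ Δ : Set (Formula A C ar), Cons Γ Δ ↔
          ∀ v : A → V,
            TR ((fun F => evalF tf v F) '' Γ) ((fun F => evalF tf v F) '' Δ) := by
  constructor
  · intro hSI
    refine ⟨Formula A C ar, fun c Fs => Formula.conn c Fs, Cons, fun Γ Δ => ?_⟩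
    constructor
    · intro h v
      have := hSI v Γ Δ h
      have e : ∀ (S : Set (Formula A C ar)),
          (fun F => evalF (fun c Fs => Formula.conn c Fs) v F) '' S =
            Formula.subst v '' S :=
        fun S => Set.image_congr (fun F _ => evalF_conn_eq_subst v F)
      rw [e, e]; exact this
    · intro h
      have := h Formula.atom
      have e1 : ∀ (S : Set (Formula A C ar)),
          (fun F => evalF (fun c Fs => Formula.conn c Fs) Formula.atom F) '' S = S := by
        intro S
        rw [Set.image_congr (fun F _ => (evalF_conn_eq_subst Formula.atom F).trans
          (subst_atom F))]
        exact Set.image_id S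
      rwa [e1, e1] at this
  · rintro ⟨V, tf, TR, hsem⟩ σ Γ Δ h
    rw [hsem]
    intro v
    have := (hsem Γ Δ).1 h (fun a => evalF tf v (σ a))
    have e : ∀ (S : Set (Formula A C ar)),
        (fun F => evalF tf v F) '' (Formula.subst σ '' S) =
          (fun F => evalF tf (fun a => evalF tf v (σ a)) F) '' S := by
      intro S
      rw [Set.image_image]
      exact Set.image_congr (fun F _ => evalF_subst tf v σ F)
    rw [e, e]; exact this
end

section
/- A consequence relation ⊢ on a sentential language is substitution-invariant and monotonic if and only if it has a strong intersective mixed semantics, i.e. a strong semantics whose truth-relation |≡ is the intersection of a family of mixed truth-relations |≡_{D_p^λ,D_c^λ}. -/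
/-!
Soundness: the truth-relation of any intersective mixed semantics is monotonic, since each
mixed relation is monotonic in its premisses and in its conclusions, and it is
substitution-invariant, since evaluating `σ F` under `v` is evaluating `F` under the
valuation `a ↦ ⟦σ a⟧(v)`.

Completeness: take the formulae themselves as truth values, the connectives as their own
truth-functions (so valuations are substitutions), and one mixed relation
`|≡_{Γ', L ∖ Δ'}` for every pair `(Γ', Δ')` with `Γ' ⊬ Δ'`. By monotonicity, `Γ ⊢ Δ` holds iff
no such pair contains `(Γ, Δ)`, and by substitution-invariance iff this holds for every
substitution instance of `(Γ, Δ)`.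
-/

universe u v w x

namespace Formula

variable {A C : Type u} {ar : C → ℕ}

theorem subst_atom (F : Formula A C ar) : F.subst atom = F := by
  induction F with
  | atom a => rfl
  | conn c Fs ih => simp only [subst, ih]

theorem evalF_subst {V : Type*} (tf : (c : C) → (Fin (ar c) → V) → V) (v : A → V)
    (σ : A → Formula A C ar) (F : Formula A C ar) :
    evalF tf v (F.subst σ) = evalF tf (fun a => evalF tf v (σ a)) F := by
  induction F with
  | atom a => rfl
  | conn c Fs ih => simp only [subst, evalF, ih]

theorem evalF_conn (σ : A → Formula A C ar) :
    (fun F => evalF conn σ F) = subst σ := by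
  funext F
  induction F with
  | atom a => rfl
  | conn c Fs ih => simp only [evalF, subst, ih]

end Formula

theorem mixed_compl_iff {V : Type*} {Dp Dc γ δ : Set V} :
    Mixed Dp Dcᶜ γ δ ↔ (γ ⊆ Dp → ¬ δ ⊆ Dc) := by
  simp only [Mixed, Set.not_subset, Set.Nonempty, Set.mem_inter_iff, Set.mem_compl_iff]

theorem Mixed.mono {V : Type*} {Dp Dc γ₁ γ₂ δ₁ δ₂ : Set V} (hγ : γ₁ ⊆ γ₂) (hδ : δ₁ ⊆ δ₂)
    (h : Mixed Dp Dc γ₁ δ₁) : Mixed Dp Dc γ₂ δ₂ :=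
  fun hγ₂ => (h (hγ.trans hγ₂)).mono (Set.inter_subset_inter_left _ hδ)

theorem IsIMS.monotonic {L V W Λ : Type*} {Cons : Set L → Set L → Prop} {interp : L → W → V}
    {Dp Dc : Λ → Set V} (h : IsIMS Cons interp Dp Dc) : Monotonic Cons := by
  intro Γ₁ Γ₂ Δ₁ Δ₂ hΓ hΔ hCons
  rw [h] at hCons ⊢
  exact fun w l => (hCons w l).mono (Set.image_mono hΓ) (Set.image_mono hΔ)

theorem IsIMS.substInvariant {A C : Type u} {ar : C → ℕ} {V Λ : Type*}
    {Cons : Set (Formula A C ar) → Set (Formula A C ar) → Prop}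
    {tf : (c : C) → (Fin (ar c) → V) → V} {Dp Dc : Λ → Set V}
    (h : IsIMS Cons (fun F v => evalF tf v F) Dp Dc) : SubstInvariant Cons := by
  intro σ Γ Δ hCons
  rw [h]
  intro v l
  simp only [Set.image_image, Formula.evalF_subst]
  exact (h Γ Δ).mp hCons _ l

theorem Monotonic.iff_forall_mixed {L : Type*} {Cons : Set L → Set L → Prop}
    (hmono : Monotonic Cons) (Γ Δ : Set L) :
    Cons Γ Δ ↔ ∀ p : {p : Set L × Set L // ¬ Cons p.1 p.2}, Mixed p.1.1 p.1.2ᶜ Γ Δ := by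
  simp only [mixed_compl_iff]
  refine ⟨fun hCons p hΓ hΔ => p.2 (hmono hΓ hΔ hCons), fun h => ?_⟩
  by_contra hCons
  exact h ⟨(Γ, Δ), hCons⟩ subset_rfl subset_rfl

theorem SubstInvariant.iff_forall_subst {A C : Type u} {ar : C → ℕ}
    {Cons : Set (Formula A C ar) → Set (Formula A C ar) → Prop}
    (hsub : SubstInvariant Cons) (Γ Δ : Set (Formula A C ar)) :
    Cons Γ Δ ↔ ∀ σ : A → Formula A C ar, Cons (Formula.subst σ '' Γ) (Formula.subst σ '' Δ) := by
  refine ⟨fun hCons σ => hsub σ Γ Δ hCons, fun h => ?_⟩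
  simpa only [Formula.subst_atom, Set.image_id'] using h Formula.atom

/-- substitution-invariance + monotonicity is equivalent to the
existence of a strong intersective mixed semantics. -/
theorem statement_2 {A C : Type u} (ar : C → ℕ)
    (Cons : Set (Formula A C ar) → Set (Formula A C ar) → Prop) :
    (SubstInvariant Cons ∧ Monotonic Cons) ↔
      ∃ (V : Type u) (tf : (c : C) → (Fin (ar c) → V) → V)
        (Λ : Type u) (Dp Dc : Λ → Set V),
        ∀ Γ Δ : Set (Formula A C ar), Cons Γ Δ ↔
          ∀ (v : A → V) (l : Λ),
            Mixed (Dp l) (Dc l)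
              ((fun F => evalF tf v F) '' Γ) ((fun F => evalF tf v F) '' Δ) := by
  constructor
  · rintro ⟨hsub, hmono⟩
    refine ⟨Formula A C ar, Formula.conn,
      {p : Set (Formula A C ar) × Set (Formula A C ar) // ¬ Cons p.1 p.2},
      fun p => p.1.1, fun p => p.1.2ᶜ, fun Γ Δ => ?_⟩
    simp only [Formula.evalF_conn]
    rw [hsub.iff_forall_subst]
    exact forall_congr' fun σ => hmono.iff_forall_mixed _ _
  · rintro ⟨V, tf, Λ, Dp, Dc, hsem⟩
    exact ⟨IsIMS.substInvariant hsem, IsIMS.monotonic hsem⟩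
end

section
/- A consequence relation ⊢ on a set L is monotonic and transitive if and only if it has a sound and complete intersective q-mixed semantics, i.e. a sound and complete intersective mixed semantics with D_c^λ ⊆ D_p^λ for every λ. -/
universe u v w x

/-- monotonicity + transitivity is equivalent to the existence of
a sound and complete intersective q-mixed semantics. -/
theorem statement_7 {L : Type u} (Cons : Set L → Set L → Prop) :
    (Monotonic Cons ∧ TransRel Cons) ↔
      ∃ (V W Λ : Type u) (interp : L → W → V) (Dp Dc : Λ → Set V),
        (∀ l : Λ, Dc l ⊆ Dp l) ∧ IsIMS Cons interp Dp Dc := by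

  constructor
  · rintro ⟨hmono, htrans⟩
    refine ⟨(ULift.{u} Prop) × (ULift.{u} Prop),
      {p : Set L × Set L // ¬ Cons p.1 p.2 ∧ p.1 ∪ p.2 = Set.univ},
      PUnit.{u+1},
      (fun F w => (⟨F ∈ w.1.1⟩, ⟨F ∈ w.1.2⟩)),
      (fun _ => {x | x.1.down}), (fun _ => {x | x.1.down ∧ ¬ x.2.down}),
      fun _ x hx => hx.1, ?_⟩
    intro Γ Δ
    constructor
    · intro h w _ hsub
      by_contra hempty
      have hΓ : Γ ⊆ w.1.1 := by
        intro F hF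
        exact hsub ⟨F, hF, rfl⟩
      have hΔ : Δ ⊆ w.1.2 := by
        intro F hF
        by_contra hF2
        have hF1 : F ∈ w.1.1 := by
          have := w.2.2
          have : F ∈ w.1.1 ∪ w.1.2 := by rw [this]; trivial
          rcases this with h | h
          · exact h
          · exact absurd h hF2
        exact hempty ⟨_, ⟨F, hF, rfl⟩, hF1, hF2⟩
      exact w.2.1 (hmono hΓ hΔ h)
    · intro h
      by_contra hc
      obtain ⟨Γ', Δ', hΓ, hΔ, hnc, huniv⟩ := htrans Γ Δ hc
      have := h ⟨(Γ', Δ'), hnc, huniv⟩ PUnit.unit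
      have hne := this (fun x hx => by
        obtain ⟨F, hF, rfl⟩ := hx
        exact hΓ hF)
      obtain ⟨x, hx, hx1, hx2⟩ := hne
      obtain ⟨F, hF, rfl⟩ := hx
      exact hx2 (hΔ hF)
  · rintro ⟨V, W, Λ, interp, Dp, Dc, hsub, hims⟩
    constructor
    · intro Γ₁ Γ₂ Δ₁ Δ₂ h12 hd12 h
      rw [hims] at h ⊢
      intro w l hs
      obtain ⟨x, hx1, hx2⟩ := h w l (fun x hx => by
        obtain ⟨F, hF, rfl⟩ := hx
        exact hs ⟨F, h12 hF, rfl⟩)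
      obtain ⟨F, hF, rfl⟩ := hx1
      exact ⟨interp F w, ⟨F, hd12 hF, rfl⟩, hx2⟩
    · intro Γ Δ hnc
      rw [hims] at hnc
      push_neg at hnc
      obtain ⟨w, l, hfail⟩ := hnc
      unfold Mixed at hfail
      push_neg at hfail
      obtain ⟨hΓ, hempty⟩ := hfail
      refine ⟨{F | interp F w ∈ Dp l}, {F | interp F w ∉ Dc l}, ?_, ?_, ?_, ?_⟩
      · intro F hF; exact hΓ ⟨F, hF, rfl⟩
      · intro F hF hFc
        exact absurd hempty (Set.nonempty_iff_ne_empty.mp ⟨_, ⟨F, hF, rfl⟩, hFc⟩)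
      · intro h
        rw [hims] at h
        obtain ⟨x, hx1, hx2⟩ := h w l (fun x hx => by
          obtain ⟨F, hF, rfl⟩ := hx
          exact hF)
        obtain ⟨F, hF, rfl⟩ := hx1
        exact hF hx2
      · ext F
        simp only [Set.mem_union, Set.mem_setOf_eq, Set.mem_univ, iff_true]
        by_cases h : interp F w ∈ Dc l
        · exact Or.inl (hsub l h)
        · exact Or.inr h
end

section
/- Let ⊢ have a sound and complete intersective mixed semantics over truth values V and worlds W, with family (D_p^λ, D_c^λ)_{λ∈Λ}. Define the Scott-Suszko reduction: V* = {1, #_p, #_c, 0} (four distinct values), W* = Λ × W, and ⟦F⟧*(λ, w) = t_λ(⟦F⟧(w)) where t_λ(α) = 1 if α ∈ D_p^λ ∩ D_c^λ, t_λ(α) = #_p if α ∈ D_p^λ \ D_c^λ, t_λ(α) = #_c if α ∈ D_c^λ \ D_p^λ, and t_λ(α) = 0 if α ∉ D_p^λ ∪ D_c^λ. Then (V*, W*, ⟦·⟧*) together with the single pair D_p* = {1, #_p}, D_c* = {1, #_c} is a sound and complete mixed semantics for ⊢: Γ ⊢ Δ iff for every (λ, w) ∈ W*, ⟦Γ⟧*(λ,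 w) |≡_{{1,#_p},{1,#_c}} ⟦Δ⟧*(λ, w). -/
universe u v w x

/- The Scott-Suszko translation `t_λ`. In `Fin 4` we encode the four distinct
truth values as: `1` = 1, `#_p` = 2, `#_c` = 3, `0` = 0. -/
open Classical in
noncomputable def tred {V : Type v} {Λ : Type x} (Dp Dc : Λ → Set V)
    (l : Λ) (a : V) : Fin 4 :=
  if a ∈ Dp l then (if a ∈ Dc l then 1 else 2)
  else (if a ∈ Dc l then 3 else 0)

/-! `t_λ` pulls `{1, #_p}` and `{1, #_c}` back to `D_p^λ` and `D_c^λ`, and the mixed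
relation between images under a map only depends on these pullbacks; taking `Λ × W` as the
new worlds turns the intersection over `λ` into part of the quantification over worlds. -/

theorem mixed_image_iff {V V' : Type*} {Dp Dc : Set V} {Dp' Dc' : Set V'} (t : V → V')
    (hp : t ⁻¹' Dp' = Dp) (hc : t ⁻¹' Dc' = Dc) (γ δ : Set V) :
    Mixed Dp' Dc' (t '' γ) (t '' δ) ↔ Mixed Dp Dc γ δ := by
  rw [Mixed, Mixed, Set.image_subset_iff, hp, ← Set.image_inter_preimage, hc,
    Set.image_nonempty]

section tred

variable {V : Type v} {Λ : Type x} (Dp Dc : Λ → Set V) (l : Λ)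

theorem tred_preimage_designated_premise : tred Dp Dc l ⁻¹' {1, 2} = Dp l := by
  ext a
  simp only [Set.mem_preimage, tred]
  split_ifs <;> simp_all

theorem tred_preimage_designated_conclusion : tred Dp Dc l ⁻¹' {1, 3} = Dc l := by
  ext a
  simp only [Set.mem_preimage, tred]
  split_ifs <;> simp_all

end tred

/-- the Scott-Suszko reduction of a sound and complete
intersective mixed semantics, with worlds `Λ × W`, interpretation
`⟦F⟧*(λ,w) = t_λ(⟦F⟧(w))`, and the single pair `D_p* = {1, #_p}`,
`D_c* = {1, #_c}`, is a sound and complete mixed semantics. -/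
theorem statement_10 {L : Type u} (Cons : Set L → Set L → Prop)
    {V : Type v} {W : Type w} {Λ : Type x}
    (interp : L → W → V) (Dp Dc : Λ → Set V)
    (h : IsIMS Cons interp Dp Dc) :
    IsMixedSem Cons
      (fun F (p : Λ × W) => tred Dp Dc p.1 (interp F p.2))
      ({1, 2} : Set (Fin 4)) ({1, 3} : Set (Fin 4)) := by
  intro Γ Δ
  rw [h Γ Δ, Prod.forall, forall_comm]
  refine forall_congr' fun l => forall_congr' fun w => ?_
  rw [← mixed_image_iff (tred Dp Dc l) (tred_preimage_designated_premise Dp Dc l)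
    (tred_preimage_designated_conclusion Dp Dc l), Set.image_image, Set.image_image]
end

section
/- Every monotonic consequence relation ⊢ has a sound and complete intersective mixed semantics over a set of at most 4 truth values; if ⊢ is moreover reflexive or transitive, over a set of at most 3 truth values; and if ⊢ is moreover both reflexive and transitive, over a set of at most 2 truth values. -/
universe u v w x

/-- `Cons` has a sound and complete intersective mixed semantics over a set of
at most `n` truth values. -/
def HasIMSCard {L : Type u} (Cons : Set L → Set L → Prop) (n : ℕ) : Prop :=
  ∃ (V : Type) (_ : Fintype V), Fintype.card V ≤ n ∧
    ∃ (W Λ : Type u) (interp : L → W → V) (Dp Dc : Λ → Set V),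
      IsIMS Cons interp Dp Dc


lemma aux_core_s11 {L : Type u} (Cons : Set L → Set L → Prop) (hmono : Monotonic Cons)
    (P : Set L → Set L → Prop)
    (hP : ∀ Γ Δ, ¬ Cons Γ Δ → ∃ Γ' Δ', Γ ⊆ Γ' ∧ Δ ⊆ Δ' ∧ ¬ Cons Γ' Δ' ∧ P Γ' Δ')
    (Γ Δ : Set L) :
    Cons Γ Δ ↔ ∀ Γ' Δ', ¬ Cons Γ' Δ' → P Γ' Δ' → Γ ⊆ Γ' → ∃ F ∈ Δ, F ∉ Δ' := by
  constructor
  · intro h Γ' Δ' hnc _ hsub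
    by_contra hno
    push_neg at hno
    exact hnc (hmono hsub hno h)
  · intro h
    by_contra hnc
    obtain ⟨Γ', Δ', h1, h2, h3, h4⟩ := hP _ _ hnc
    obtain ⟨F, hF, hF'⟩ := h Γ' Δ' h3 h4 h1
    exact hF' (h2 hF)

/-- maximum Suszko rank theorems. -/
theorem statement_11 {L : Type u} (Cons : Set L → Set L → Prop)
    (hmono : Monotonic Cons) :
    HasIMSCard Cons 4 ∧
    ((ReflRel Cons ∨ TransRel Cons) → HasIMSCard Cons 3) ∧
    ((ReflRel Cons ∧ TransRel Cons) → HasIMSCard Cons 2) := by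
  classical
  refine ⟨?_, ?_, ?_⟩
  · -- 4 values
    refine ⟨Bool × Bool, inferInstance, by decide,
      {p : Set L × Set L // ¬ Cons p.1 p.2}, PUnit,
      fun F p => (decide (F ∈ p.1.1), decide (F ∈ p.1.2)),
      fun _ => {v | v.1 = true}, fun _ => {v | v.2 = false}, ?_⟩
    intro Γ Δ
    rw [aux_core_s11 Cons hmono (fun _ _ => True)
      (fun Γ Δ h => ⟨Γ, Δ, subset_rfl, subset_rfl, h, trivial⟩)]
    constructor
    · rintro h ⟨⟨Γ', Δ'⟩, hw⟩ _ hsub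
      obtain ⟨F, hF, hF'⟩ := h Γ' Δ' hw trivial
        (fun F hF => by simpa using hsub ⟨F, hF, rfl⟩)
      exact ⟨_, ⟨F, hF, rfl⟩, by simpa using hF'⟩
    · intro h Γ' Δ' hnc _ hsub
      obtain ⟨v, ⟨F, hF, rfl⟩, hv⟩ := h ⟨(Γ', Δ'), hnc⟩ PUnit.unit
        (by rintro v ⟨F, hF, rfl⟩; simpa using hsub hF)
      exact ⟨F, hF, by simpa using hv⟩
  · rintro (hrefl | htrans)
    · -- reflexive: 3 values
      refine ⟨{v : Bool × Bool // ¬ (v.1 = true ∧ v.2 = true)}, inferInstance, by decide,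
        {p : Set L × Set L // ¬ Cons p.1 p.2}, PUnit,
        fun F p => ⟨(decide (F ∈ p.1.1), decide (F ∈ p.1.2)), by
          simp only [decide_eq_true_iff]
          rintro ⟨h1, h2⟩
          exact p.2 (hmono (Set.singleton_subset_iff.2 h1)
            (Set.singleton_subset_iff.2 h2) (hrefl F))⟩,
        fun _ => {v | v.1.1 = true}, fun _ => {v | v.1.2 = false}, ?_⟩
      intro Γ Δ
      rw [aux_core_s11 Cons hmono (fun _ _ => True)
        (fun Γ Δ h => ⟨Γ, Δ, subset_rfl, subset_rfl, h, trivial⟩)]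
      constructor
      · rintro h ⟨⟨Γ', Δ'⟩, hw⟩ _ hsub
        obtain ⟨F, hF, hF'⟩ := h Γ' Δ' hw trivial
          (fun F hF => by simpa using hsub ⟨F, hF, rfl⟩)
        exact ⟨_, ⟨F, hF, rfl⟩, by simpa using hF'⟩
      · intro h Γ' Δ' hnc _ hsub
        obtain ⟨v, ⟨F, hF, rfl⟩, hv⟩ := h ⟨(Γ', Δ'), hnc⟩ PUnit.unit
          (by rintro v ⟨F, hF, rfl⟩; simpa using hsub hF)
        exact ⟨F, hF, by simpa using hv⟩
    · -- transitive: 3 values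
      refine ⟨{v : Bool × Bool // v.1 = true ∨ v.2 = true}, inferInstance, by decide,
        {p : Set L × Set L // ¬ Cons p.1 p.2 ∧ p.1 ∪ p.2 = Set.univ}, PUnit,
        fun F p => ⟨(decide (F ∈ p.1.1), decide (F ∈ p.1.2)), by
          simp only [decide_eq_true_iff]
          have : F ∈ p.1.1 ∪ p.1.2 := by rw [p.2.2]; trivial
          exact this⟩,
        fun _ => {v | v.1.1 = true}, fun _ => {v | v.1.2 = false}, ?_⟩
      intro Γ Δ
      rw [aux_core_s11 Cons hmono (fun Γ' Δ' => Γ' ∪ Δ' = Set.univ) htrans]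
      constructor
      · rintro h ⟨⟨Γ', Δ'⟩, hw1, hw2⟩ _ hsub
        obtain ⟨F, hF, hF'⟩ := h Γ' Δ' hw1 hw2
          (fun F hF => by simpa using hsub ⟨F, hF, rfl⟩)
        exact ⟨_, ⟨F, hF, rfl⟩, by simpa using hF'⟩
      · intro h Γ' Δ' hnc hP hsub
        obtain ⟨v, ⟨F, hF, rfl⟩, hv⟩ := h ⟨(Γ', Δ'), hnc, hP⟩ PUnit.unit
          (by rintro v ⟨F, hF, rfl⟩; simpa using hsub hF)
        exact ⟨F, hF, by simpa using hv⟩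
  · rintro ⟨hrefl, htrans⟩
    -- reflexive and transitive: 2 values
    refine ⟨Bool, inferInstance, by decide,
      {p : Set L × Set L // ¬ Cons p.1 p.2 ∧ p.1 ∪ p.2 = Set.univ}, PUnit,
      fun F p => decide (F ∈ p.1.1),
      fun _ => {v | v = true}, fun _ => {v | v = true}, ?_⟩
    intro Γ Δ
    rw [aux_core_s11 Cons hmono (fun Γ' Δ' => Γ' ∪ Δ' = Set.univ) htrans]
    constructor
    · rintro h ⟨⟨Γ', Δ'⟩, hw1, hw2⟩ _ hsub
      obtain ⟨F, hF, hF'⟩ := h Γ' Δ' hw1 hw2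
        (fun F hF => by simpa using hsub ⟨F, hF, rfl⟩)
      have hFΓ : F ∈ Γ' := by
        have : F ∈ Γ' ∪ Δ' := by rw [hw2]; trivial
        exact this.resolve_right hF'
      exact ⟨_, ⟨F, hF, rfl⟩, by simpa using hFΓ⟩
    · intro h Γ' Δ' hnc hP hsub
      obtain ⟨v, ⟨F, hF, rfl⟩, hv⟩ := h ⟨(Γ', Δ'), hnc, hP⟩ PUnit.unit
        (by rintro v ⟨F, hF, rfl⟩; simpa using hsub hF)
      have hFΓ : F ∈ Γ' := by simpa using hv
      refine ⟨F, hF, fun hFΔ => hnc ?_⟩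
      exact hmono (Set.singleton_subset_iff.2 hFΓ)
        (Set.singleton_subset_iff.2 hFΔ) (hrefl F)
end

section
/- There exists a sentential language and a substitution-invariant, monotonic consequence relation ⊢ on it of Suszko rank exactly 4: ⊢ has a sound and complete intersective mixed semantics over a set of 4 truth values, but has no sound and complete intersective mixed semantics over any set of fewer than 4 truth values. -/
universe u v w x

/-! Auxiliary material for statement_12. -/

/-- Canonical worlds: pairs that are not in the consequence relation. -/
def CanonW {L : Type} (Cons : Set L → Set L → Prop) : Type :=
  {p : Set L × Set L // ¬ Cons p.1 p.2}

/-- Canonical 4-valued interpretation. -/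
def canonInterp {L : Type} (Cons : Set L → Set L → Prop)
    (F : L) (w : CanonW Cons) : Prop × Prop :=
  (F ∈ w.val.1, F ∉ w.val.2)

/-- Every monotonic consequence relation has a sound and complete intersective
mixed semantics over the 4-element type `Prop × Prop`. -/
theorem canon_isIMS {L : Type} (Cons : Set L → Set L → Prop)
    (hmono : Monotonic Cons) :
    IsIMS Cons (canonInterp Cons)
      (fun _ : Unit => {v : Prop × Prop | v.1})
      (fun _ : Unit => {v : Prop × Prop | v.2}) := by
  intro Γ Δ
  constructor
  · intro h w _ hsub
    by_contra hne
    have hΓ : Γ ⊆ w.val.1 := by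
      intro F hF
      exact hsub ⟨F, hF, rfl⟩
    have hΔ : Δ ⊆ w.val.2 := by
      intro F hF
      by_contra hF2
      exact hne ⟨canonInterp Cons F w, ⟨F, hF, rfl⟩, hF2⟩
    exact w.prop (hmono hΓ hΔ h)
  · intro h
    by_contra hc
    have hm := h ⟨(Γ, Δ), hc⟩ ()
    obtain ⟨v, ⟨F, hF, rfl⟩, hv⟩ := hm (by rintro v ⟨F, hF, rfl⟩; exact hF)
    exact hv hF

/-- The four constants of our language. -/
def kf (i : Fin 4) : Formula Empty (Fin 4) (fun _ => 0) :=
  Formula.conn i Fin.elim0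

theorem kf_inj : Function.Injective kf := by
  intro i j h
  cases h
  rfl

theorem kf_subst (σ : Empty → Formula Empty (Fin 4) (fun _ => 0)) (i : Fin 4) :
    Formula.subst σ (kf i) = kf i := by
  show Formula.conn i _ = Formula.conn i _
  congr 1
  funext j
  exact j.elim0

/-- The consequence relation of Suszko rank 4. -/
def Cons4 (Γ Δ : Set (Formula Empty (Fin 4) (fun _ => 0))) : Prop :=
  kf 2 ∈ Γ ∨ kf 3 ∈ Γ ∨ kf 0 ∈ Δ ∨ kf 2 ∈ Δ

/-- there is a substitution-invariant monotonic logic of Suszko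
rank exactly 4: it has a sound and complete intersective mixed semantics over a
set of 4 truth values, but none over any set of fewer than 4 truth values. -/
theorem statement_12 :
    ∃ (A C : Type) (ar : C → ℕ)
      (Cons : Set (Formula A C ar) → Set (Formula A C ar) → Prop),
      SubstInvariant Cons ∧ Monotonic Cons ∧
      (∃ (V : Type) (_ : Fintype V), Fintype.card V = 4 ∧
        ∃ (W Λ : Type) (interp : Formula A C ar → W → V) (Dp Dc : Λ → Set V),
          IsIMS Cons interp Dp Dc) ∧
      (∀ (V : Type v) (W : Type w) (Λ : Type x)
        (interp : Formula A C ar → W → V) (Dp Dc : Λ → Set V),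
        IsIMS Cons interp Dp Dc → 4 ≤ Cardinal.mk V) := by
  refine ⟨Empty, Fin 4, fun _ => 0, Cons4, ?_, ?_, ?_, ?_⟩
  · -- substitution invariance
    intro σ Γ Δ h
    rcases h with h | h | h | h
    · exact Or.inl ⟨kf 2, h, kf_subst σ 2⟩
    · exact Or.inr (Or.inl ⟨kf 3, h, kf_subst σ 3⟩)
    · exact Or.inr (Or.inr (Or.inl ⟨kf 0, h, kf_subst σ 0⟩))
    · exact Or.inr (Or.inr (Or.inr ⟨kf 2, h, kf_subst σ 2⟩))
  · -- monotonicity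
    intro Γ₁ Γ₂ Δ₁ Δ₂ hΓ hΔ h
    rcases h with h | h | h | h
    · exact Or.inl (hΓ h)
    · exact Or.inr (Or.inl (hΓ h))
    · exact Or.inr (Or.inr (Or.inl (hΔ h)))
    · exact Or.inr (Or.inr (Or.inr (hΔ h)))
  · -- 4-valued semantics exists
    have hmono : Monotonic Cons4 := by
      intro Γ₁ Γ₂ Δ₁ Δ₂ hΓ hΔ h
      rcases h with h | h | h | h
      · exact Or.inl (hΓ h)
      · exact Or.inr (Or.inl (hΓ h))
      · exact Or.inr (Or.inr (Or.inl (hΔ h)))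
      · exact Or.inr (Or.inr (Or.inr (hΔ h)))
    exact ⟨Prop × Prop, inferInstance, by simp, CanonW Cons4, Unit,
      canonInterp Cons4, _, _, canon_isIMS Cons4 hmono⟩
  · -- lower bound: any IMS needs at least 4 truth values
    intro V W Λ interp Dp Dc hI
    have hne : ∀ i j : Fin 4, i ≠ j → kf i ≠ kf j := by
      intro i j hij h
      exact hij (kf_inj h)
    -- the key non-consequence
    have h1 : ¬ Cons4 {kf 0, kf 1} {kf 1, kf 3} := by
      rintro (h | h | h | h) <;>
        rcases h with h | h <;>
        exact hne _ _ (by decide) h.symm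
    rw [hI] at h1
    push_neg at h1
    obtain ⟨w, l, hM⟩ := h1
    unfold Mixed at hM
    push_neg at hM
    obtain ⟨hP, hC⟩ := hM
    -- abbreviations
    set vx := interp (kf 0) w with hvx
    set vy := interp (kf 1) w with hvy
    set vz := interp (kf 2) w with hvz
    set vu := interp (kf 3) w with hvu
    have hCempty : ∀ v ∈ (fun F => interp F w) '' ({kf 1, kf 3} :
        Set (Formula Empty (Fin 4) (fun _ => 0))), v ∉ Dc l := by
      intro v hv hvDc
      exact (Set.not_nonempty_iff_eq_empty.mpr rfl) (by
        have : (((fun F => interp F w) '' {kf 1, kf 3}) ∩ Dc l).Nonempty :=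
          ⟨v, hv, hvDc⟩
        rw [hC] at this
        exact this)
    have hxP : vx ∈ Dp l := hP ⟨kf 0, Or.inl rfl, rfl⟩
    have hyP : vy ∈ Dp l := hP ⟨kf 1, Or.inr rfl, rfl⟩
    have hyC : vy ∉ Dc l := hCempty vy ⟨kf 1, Or.inl rfl, rfl⟩
    have huC : vu ∉ Dc l := hCempty vu ⟨kf 3, Or.inr rfl, rfl⟩
    -- Cons4 {x,y} {x} gives vx ∈ Dc l
    have hxC : vx ∈ Dc l := by
      have h2 : Cons4 {kf 0, kf 1} {kf 0} := Or.inr (Or.inr (Or.inl rfl))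
      obtain ⟨v, ⟨F, hF, rfl⟩, hv⟩ := ((hI _ _).mp h2) w l hP
      rw [Set.eq_of_mem_singleton hF] at hv
      exact hv
    -- Cons4 {x,y} {z} gives vz ∈ Dc l
    have hzC : vz ∈ Dc l := by
      have h3 : Cons4 {kf 0, kf 1} {kf 2} := Or.inr (Or.inr (Or.inr rfl))
      obtain ⟨v, ⟨F, hF, rfl⟩, hv⟩ := ((hI _ _).mp h3) w l hP
      rw [Set.eq_of_mem_singleton hF] at hv
      exact hv
    -- Cons4 {x,y,z} {y,u} gives vz ∉ Dp l
    have hzP : vz ∉ Dp l := by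
      intro hzDp
      have h4 : Cons4 {kf 0, kf 1, kf 2} {kf 1, kf 3} := Or.inl (by
        exact Or.inr (Or.inr rfl))
      have hm := ((hI _ _).mp h4) w l
      have hsub : (fun F => interp F w) '' {kf 0, kf 1, kf 2} ⊆ Dp l := by
        rintro v ⟨F, (rfl | rfl | rfl), rfl⟩
        · exact hxP
        · exact hyP
        · exact hzDp
      obtain ⟨v, hv1, hv2⟩ := hm hsub
      exact hCempty v hv1 hv2
    -- Cons4 {x,y,u} {y,u} gives vu ∉ Dp l
    have huP : vu ∉ Dp l := by
      intro huDp
      have h5 : Cons4 {kf 0, kf 1, kf 3} {kf 1, kf 3} := Or.inr (Or.inl (by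
        exact Or.inr (Or.inr rfl)))
      have hm := ((hI _ _).mp h5) w l
      have hsub : (fun F => interp F w) '' {kf 0, kf 1, kf 3} ⊆ Dp l := by
        rintro v ⟨F, (rfl | rfl | rfl), rfl⟩
        · exact hxP
        · exact hyP
        · exact huDp
      obtain ⟨v, hv1, hv2⟩ := hm hsub
      exact hCempty v hv1 hv2
    -- four pairwise distinct values
    have h01 : vx ≠ vy := fun h => hyC (h ▸ hxC)
    have h02 : vx ≠ vz := fun h => hzP (h ▸ hxP)
    have h03 : vx ≠ vu := fun h => huP (h ▸ hxP)
    have h12 : vy ≠ vz := fun h => hzP (h ▸ hyP)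
    have h13 : vy ≠ vu := fun h => huP (h ▸ hyP)
    have h23 : vz ≠ vu := fun h => huC (h ▸ hzC)
    have hinj : Function.Injective ![vx, vy, vz, vu] := by
      intro i j hij
      fin_cases i <;> fin_cases j <;> simp at hij <;>
        first
          | rfl
          | exact absurd hij h01
          | exact absurd hij h02
          | exact absurd hij h03
          | exact absurd hij h12
          | exact absurd hij h13
          | exact absurd hij h23
          | exact absurd hij.symm h01
          | exact absurd hij.symm h02
          | exact absurd hij.symm h03
          | exact absurd hij.symm h12
          | exact absurd hij.symm h13
          | exact absurd hij.symm h23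
    have hle := Cardinal.lift_mk_le'.mpr ⟨⟨![vx, vy, vz, vu], hinj⟩⟩
    simpa using hle
end

section
/- Let ⊢ be a monotonic, non-permeable consequence relation on a set L. Then the mixed Suszko rank of ⊢ is: exactly 2 if and only if ⊢ is reflexive and transitive; exactly 3 if and only if ⊢ is reflexive or transitive but not both; and exactly 4 if and only if ⊢ is neither reflexive nor transitive. -/
universe u v w x

/-- `Cons` has a sound and complete mixed semantics over a set of at most `n`
truth values. -/
def HasMixedCard {L : Type u} (Cons : Set L → Set L → Prop) (n : ℕ) : Prop :=
  ∃ (V : Type) (_ : Fintype V), Fintype.card V ≤ n ∧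
    ∃ (W : Type u) (interp : L → W → V) (Dp Dc : Set V),
      IsMixedSem Cons interp Dp Dc

namespace Statement13Aux
open scoped Classical

section Sem
variable {L : Type u} {V : Type v} {W : Type w} {Cons : Set L → Set L → Prop}
  {interp : L → W → V} {Dp Dc : Set V}

lemma rl_of_disjoint (sem : IsMixedSem Cons interp Dp Dc)
    (hd : ∀ x, ¬ (x ∈ Dp ∧ x ∈ Dc)) : RLPermeable Cons := by
  intro Γ Δ S h
  rw [sem] at h ⊢
  intro w hsub
  obtain ⟨x, hx, hxDc⟩ := h w (by rintro x ⟨F, hF, rfl⟩; exact hsub ⟨F, Or.inl hF, rfl⟩)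
  obtain ⟨F, hF, rfl⟩ := hx
  rcases hF with hF | hF
  · exact absurd ⟨hsub ⟨F, Or.inr hF, rfl⟩, hxDc⟩ (hd _)
  · exact ⟨_, ⟨F, hF, rfl⟩, hxDc⟩

lemma lr_of_union (sem : IsMixedSem Cons interp Dp Dc)
    (hu : ∀ x, x ∈ Dp ∨ x ∈ Dc) : LRPermeable Cons := by
  intro Γ Δ S h
  rw [sem] at h ⊢
  intro w hsub
  by_cases hS : (fun F => interp F w) '' S ⊆ Dp
  · obtain ⟨x, hx, hxDc⟩ := h w (by
      rintro x ⟨F, hF | hF, rfl⟩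
      · exact hsub ⟨F, hF, rfl⟩
      · exact hS ⟨F, hF, rfl⟩)
    obtain ⟨F, hF, rfl⟩ := hx
    exact ⟨_, ⟨F, Or.inr hF, rfl⟩, hxDc⟩
  · obtain ⟨x, hx, hxnp⟩ := Set.not_subset.mp hS
    obtain ⟨F, hF, rfl⟩ := hx
    exact ⟨_, ⟨F, Or.inl hF, rfl⟩, (hu _).resolve_left hxnp⟩

lemma refl_of (sem : IsMixedSem Cons interp Dp Dc) (h : Dp ⊆ Dc) :
    ReflRel Cons := by
  intro F
  rw [sem]
  intro w hsub
  exact ⟨interp F w, ⟨F, rfl, rfl⟩, h (hsub ⟨F, rfl, rfl⟩)⟩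

lemma trans_of (sem : IsMixedSem Cons interp Dp Dc) (h : Dc ⊆ Dp) :
    TransRel Cons := by
  intro Γ Δ hnc
  rw [sem] at hnc
  push_neg at hnc
  obtain ⟨w, hw⟩ := hnc
  obtain ⟨hsub, hne⟩ := _root_.not_imp.mp hw
  refine ⟨{F | interp F w ∈ Dp}, {F | interp F w ∉ Dc}, ?_, ?_, ?_, ?_⟩
  · intro F hF; exact hsub ⟨F, hF, rfl⟩
  · intro F hF hc; exact hne ⟨interp F w, ⟨F, hF, rfl⟩, hc⟩
  · rw [sem]
    intro hall
    obtain ⟨x, ⟨F, hF, rfl⟩, hc⟩ := hall w (by rintro x ⟨F, hF, rfl⟩; exact hF)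
    exact hF hc
  · ext F
    simp only [Set.mem_union, Set.mem_setOf_eq, Set.mem_univ, iff_true]
    by_cases hp : interp F w ∈ Dp
    · exact Or.inl hp
    · exact Or.inr fun hc => hp (h hc)

end Sem
end Statement13Aux
namespace Statement13Aux
open scoped Classical

lemma two_le {V : Type} [Fintype V] {a b : V} (hab : a ≠ b) :
    2 ≤ Fintype.card V := by
  classical
  have h : ({a, b} : Finset V).card = 2 := by
    rw [Finset.card_insert_of_notMem (by simp [hab]), Finset.card_singleton]
  exact h ▸ Finset.card_le_univ _

lemma three_le {V : Type} [Fintype V] {a b c : V} (hab : a ≠ b) (hac : a ≠ c)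
    (hbc : b ≠ c) : 3 ≤ Fintype.card V := by
  classical
  have h : ({a, b, c} : Finset V).card = 3 := by
    rw [Finset.card_insert_of_notMem (by simp [hab, hac]),
        Finset.card_insert_of_notMem (by simp [hbc]), Finset.card_singleton]
  exact h ▸ Finset.card_le_univ _

lemma four_le {V : Type} [Fintype V] {a b c d : V} (hab : a ≠ b) (hac : a ≠ c)
    (had : a ≠ d) (hbc : b ≠ c) (hbd : b ≠ d) (hcd : c ≠ d) :
    4 ≤ Fintype.card V := by
  classical
  have h : ({a, b, c, d} : Finset V).card = 4 := by
    rw [Finset.card_insert_of_notMem (by simp [hab, hac, had]),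
        Finset.card_insert_of_notMem (by simp [hbc, hbd]),
        Finset.card_insert_of_notMem (by simp [hcd]), Finset.card_singleton]
  exact h ▸ Finset.card_le_univ _

section Main
variable {L : Type u} {Cons : Set L → Set L → Prop}

lemma inter_nonempty {V : Type v} {W : Type w} {interp : L → W → V} {Dp Dc : Set V}
    (hnp : ¬ Permeable Cons) (sem : IsMixedSem Cons interp Dp Dc) :
    ∃ x, x ∈ Dp ∧ x ∈ Dc := by
  by_contra h
  push_neg at h
  exact hnp (Or.inr (rl_of_disjoint sem fun x ⟨h1, h2⟩ => h x h1 h2))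

lemma outside_nonempty {V : Type v} {W : Type w} {interp : L → W → V} {Dp Dc : Set V}
    (hnp : ¬ Permeable Cons) (sem : IsMixedSem Cons interp Dp Dc) :
    ∃ x, x ∉ Dp ∧ x ∉ Dc := by
  by_contra h
  push_neg at h
  refine hnp (Or.inl (lr_of_union sem fun x => ?_))
  by_cases hx : x ∈ Dp
  · exact Or.inl hx
  · exact Or.inr (h x hx)

lemma not_h1 (hnp : ¬ Permeable Cons) : ¬ HasMixedCard Cons 1 := by
  rintro ⟨V, fV, hcard, W, interp, Dp, Dc, sem⟩
  obtain ⟨c, hcp, hcc⟩ := inter_nonempty hnp sem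
  obtain ⟨d, hdp, hdc⟩ := outside_nonempty hnp sem
  have : 2 ≤ Fintype.card V := two_le (show c ≠ d from fun h => hdp (h ▸ hcp))
  omega

lemma k2 (hnp : ¬ Permeable Cons) (h2 : HasMixedCard Cons 2) :
    ReflRel Cons ∧ TransRel Cons := by
  obtain ⟨V, fV, hcard, W, interp, Dp, Dc, sem⟩ := h2
  obtain ⟨c, hcp, hcc⟩ := inter_nonempty hnp sem
  obtain ⟨d, hdp, hdc⟩ := outside_nonempty hnp sem
  have hcd : c ≠ d := fun h => hdp (h ▸ hcp)
  constructor
  · refine refl_of sem fun a hap => ?_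
    by_contra hac
    have : 3 ≤ Fintype.card V :=
      three_le (show a ≠ c from fun h => hac (h ▸ hcc))
        (show a ≠ d from fun h => hdp (h ▸ hap)) hcd
    omega
  · refine trans_of sem fun b hbc => ?_
    by_contra hbp
    have : 3 ≤ Fintype.card V :=
      three_le (show b ≠ c from fun h => hbp (h ▸ hcp))
        (show b ≠ d from fun h => hdc (h ▸ hbc)) hcd
    omega

lemma k3 (hnp : ¬ Permeable Cons) (h3 : HasMixedCard Cons 3) :
    ReflRel Cons ∨ TransRel Cons := by
  obtain ⟨V, fV, hcard, W, interp, Dp, Dc, sem⟩ := h3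
  obtain ⟨c, hcp, hcc⟩ := inter_nonempty hnp sem
  obtain ⟨d, hdp, hdc⟩ := outside_nonempty hnp sem
  have hcd : c ≠ d := fun h => hdp (h ▸ hcp)
  by_contra h
  push_neg at h
  obtain ⟨hnr, hnt⟩ := h
  have hsp : ¬ Dp ⊆ Dc := fun hs => hnr (refl_of sem hs)
  have hsc : ¬ Dc ⊆ Dp := fun hs => hnt (trans_of sem hs)
  obtain ⟨a, hap, hac⟩ := Set.not_subset.mp hsp
  obtain ⟨b, hbc, hbp⟩ := Set.not_subset.mp hsc
  have : 4 ≤ Fintype.card V :=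
    four_le (show a ≠ b from fun h => hbp (h ▸ hap))
      (show a ≠ c from fun h => hac (h ▸ hcc))
      (show a ≠ d from fun h => hdp (h ▸ hap))
      (show b ≠ c from fun h => hbp (h ▸ hcp))
      (show b ≠ d from fun h => hdc (h ▸ hbc)) hcd
  omega

end Main
end Statement13Aux
namespace Statement13Aux
open scoped Classical

section Constr
variable {L : Type u} {Cons : Set L → Set L → Prop}

lemma hasMixed4 (hmono : Monotonic Cons) : HasMixedCard Cons 4 := by
  refine ⟨Prop × Prop, inferInstance, ?_, {p : Set L × Set L // ¬ Cons p.1 p.2},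
    fun F w => (F ∈ w.1.1, F ∈ w.1.2), {v | v.1}, {v | ¬ v.2}, ?_⟩
  · simp [Fintype.card_prop]
  · intro Γ Δ
    constructor
    · intro h w hsub
      by_contra hne
      refine w.2 (hmono (fun F hF => hsub ⟨F, hF, rfl⟩) (fun F hF => ?_) h)
      by_contra hB
      exact hne ⟨(F ∈ w.1.1, F ∈ w.1.2), ⟨F, hF, rfl⟩, hB⟩
    · intro hall
      by_contra hnc
      obtain ⟨v, ⟨F, hF, rfl⟩, hv⟩ :=
        hall ⟨(Γ, Δ), hnc⟩ (by rintro v ⟨F, hF, rfl⟩; exact hF)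
      exact hv hF

lemma hasMixed3_refl (hmono : Monotonic Cons) (hrefl : ReflRel Cons) :
    HasMixedCard Cons 3 := by
  refine ⟨Fin 3, inferInstance, by simp, {p : Set L × Set L // ¬ Cons p.1 p.2},
    fun F w => if F ∈ w.1.1 then 0 else if F ∈ w.1.2 then 1 else 2,
    {0}, {v | v ≠ 1}, ?_⟩
  intro Γ Δ
  constructor
  · intro h w hsub
    by_contra hne
    refine w.2 (hmono (fun F hF => ?_) (fun F hF => ?_) h)
    · have h0 := hsub ⟨F, hF, rfl⟩
      by_contra hA
      simp only [Set.mem_singleton_iff, if_neg hA] at h0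
      by_cases hB : F ∈ w.1.2
      · rw [if_pos hB] at h0; exact absurd h0 (by decide)
      · rw [if_neg hB] at h0; exact absurd h0 (by decide)
    · by_contra hB
      refine hne ⟨_, ⟨F, hF, rfl⟩, ?_⟩
      show (if F ∈ w.1.1 then (0:Fin 3) else if F ∈ w.1.2 then 1 else 2) ≠ 1
      by_cases hA : F ∈ w.1.1
      · rw [if_pos hA]; decide
      · rw [if_neg hA, if_neg hB]; decide
  · intro hall
    by_contra hnc
    obtain ⟨v, ⟨F, hF, rfl⟩, hv⟩ := hall ⟨(Γ, Δ), hnc⟩ (by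
      rintro v ⟨F, hF, rfl⟩
      simp only [Set.mem_singleton_iff, if_pos hF])
    have hA : F ∉ Γ := fun hA =>
      hnc (hmono (Set.singleton_subset_iff.mpr hA)
        (Set.singleton_subset_iff.mpr hF) (hrefl F))
    refine hv ?_
    show (if F ∈ Γ then (0:Fin 3) else if F ∈ Δ then 1 else 2) = 1
    rw [if_neg hA, if_pos hF]

lemma hasMixed3_trans (hmono : Monotonic Cons) (htrans : TransRel Cons) :
    HasMixedCard Cons 3 := by
  refine ⟨Fin 3, inferInstance, by simp,
    {p : Set L × Set L // ¬ Cons p.1 p.2 ∧ p.1 ∪ p.2 = Set.univ},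
    fun F w => if F ∈ w.1.1 then (if F ∈ w.1.2 then 0 else 1) else 2,
    {v | v ≠ 2}, {1}, ?_⟩
  intro Γ Δ
  constructor
  · intro h w hsub
    by_contra hne
    refine w.2.1 (hmono (fun F hF => ?_) (fun F hF => ?_) h)
    · have h0 := hsub ⟨F, hF, rfl⟩
      by_contra hA
      simp only [Set.mem_setOf_eq, if_neg hA] at h0
      exact h0 rfl
    · by_contra hB
      by_cases hA : F ∈ w.1.1
      · refine hne ⟨_, ⟨F, hF, rfl⟩, ?_⟩
        show (if F ∈ w.1.1 then (if F ∈ w.1.2 then (0:Fin 3) else 1) else 2) ∈ ({1} : Set (Fin 3))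
        rw [if_pos hA, if_neg hB]; rfl
      · have : F ∈ w.1.1 ∪ w.1.2 := by rw [w.2.2]; trivial
        exact this.elim hA hB
  · intro hall
    by_contra hnc
    obtain ⟨A, B, hΓA, hΔB, hnAB, hu⟩ := htrans Γ Δ hnc
    obtain ⟨v, ⟨F, hF, rfl⟩, hv⟩ := hall ⟨(A, B), hnAB, hu⟩ (by
      rintro v ⟨F, hF, rfl⟩
      simp only [Set.mem_setOf_eq, if_pos (hΓA hF)]
      by_cases hB : F ∈ B <;> simp [hB])
    simp only [Set.mem_singleton_iff] at hv
    by_cases hA : F ∈ A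
    · simp only [if_pos hA, if_pos (hΔB hF)] at hv
      exact absurd hv (by decide)
    · simp only [if_neg hA] at hv
      exact absurd hv (by decide)

lemma hasMixed2 (hmono : Monotonic Cons) (hrefl : ReflRel Cons)
    (htrans : TransRel Cons) : HasMixedCard Cons 2 := by
  refine ⟨Prop, inferInstance, by rw [Fintype.card_prop],
    {p : Set L × Set L // ¬ Cons p.1 p.2 ∧ p.1 ∪ p.2 = Set.univ},
    fun F w => F ∈ w.1.1, {p | p}, {p | p}, ?_⟩
  intro Γ Δ
  constructor
  · intro h w hsub
    by_contra hne
    refine w.2.1 (hmono (fun F hF => hsub ⟨F, hF, rfl⟩) (fun F hF => ?_) h)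
    have hA : F ∉ w.1.1 := fun hA => hne ⟨_, ⟨F, hF, rfl⟩, hA⟩
    have : F ∈ w.1.1 ∪ w.1.2 := by rw [w.2.2]; trivial
    exact this.resolve_left hA
  · intro hall
    by_contra hnc
    obtain ⟨A, B, hΓA, hΔB, hnAB, hu⟩ := htrans Γ Δ hnc
    obtain ⟨v, ⟨F, hF, rfl⟩, hv⟩ := hall ⟨(A, B), hnAB, hu⟩ (by
      rintro v ⟨F, hF, rfl⟩
      exact hΓA hF)
    exact hnAB (hmono (Set.singleton_subset_iff.mpr hv)
      (Set.singleton_subset_iff.mpr (hΔB hF)) (hrefl F))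

end Constr
end Statement13Aux

/-- exact mixed Suszko rank theorems for monotonic non-permeable
consequence relations.  "The mixed Suszko rank is exactly n" is rendered as:
there is a sound and complete mixed semantics over at most n truth values, but
none over at most n-1 truth values. -/
theorem statement_13 {L : Type u} (Cons : Set L → Set L → Prop)
    (hmono : Monotonic Cons) (hnp : ¬ Permeable Cons) :
    ((HasMixedCard Cons 2 ∧ ¬ HasMixedCard Cons 1) ↔
      (ReflRel Cons ∧ TransRel Cons)) ∧
    ((HasMixedCard Cons 3 ∧ ¬ HasMixedCard Cons 2) ↔
      ((ReflRel Cons ∨ TransRel Cons) ∧ ¬ (ReflRel Cons ∧ TransRel Cons))) ∧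
    ((HasMixedCard Cons 4 ∧ ¬ HasMixedCard Cons 3) ↔
      (¬ ReflRel Cons ∧ ¬ TransRel Cons)) := by

  obtain ⟨hLR, hRL⟩ := not_or.mp hnp
  have hnp' : ¬ Permeable Cons := hnp
  refine ⟨⟨fun h => Statement13Aux.k2 hnp' h.1, fun ⟨hr, ht⟩ =>
    ⟨Statement13Aux.hasMixed2 hmono hr ht, Statement13Aux.not_h1 hnp'⟩⟩, ?_, ?_⟩
  · constructor
    · rintro ⟨h3, nh2⟩
      exact ⟨Statement13Aux.k3 hnp' h3, fun ⟨hr, ht⟩ =>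
        nh2 (Statement13Aux.hasMixed2 hmono hr ht)⟩
    · rintro ⟨hor, hnand⟩
      exact ⟨hor.elim (Statement13Aux.hasMixed3_refl hmono)
        (Statement13Aux.hasMixed3_trans hmono),
        fun h2 => hnand (Statement13Aux.k2 hnp' h2)⟩
  · constructor
    · rintro ⟨h4, nh3⟩
      exact ⟨fun hr => nh3 (Statement13Aux.hasMixed3_refl hmono hr),
        fun ht => nh3 (Statement13Aux.hasMixed3_trans hmono ht)⟩
    · rintro ⟨hnr, hnt⟩
      exact ⟨Statement13Aux.hasMixed4 hmono,
        fun h3 => (Statement13Aux.k3 hnp' h3).elim hnr hnt⟩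
end

section
/- There exists a sentential language and a substitution-invariant, monotonic, reflexive and transitive consequence relation ⊢ on it which has no truth-adequate intersective mixed semantics over any 2-element set of truth values (although some such semantics exists over 3 truth values). -/
universe u v w x

namespace S14

abbrev ar3 : Fin 3 → ℕ := fun _ => 0

abbrev L := Formula Empty (Fin 3) ar3

def mk (c : Fin 3) : L := Formula.conn c (fun i => i.elim0)

def val : L → Fin 3
  | .atom e => e.elim
  | .conn c _ => c

lemma val_mk (c : Fin 3) : val (mk c) = c := rfl

lemma mk_val (F : L) : mk (val F) = F := by
  cases F with
  | atom e => exact e.elim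
  | conn c Fs => exact congrArg (Formula.conn c) (funext fun i => i.elim0)

lemma mk_ne {c d : Fin 3} (h : c ≠ d) : mk c ≠ mk d := by
  intro he
  exact h (by rw [← val_mk c, he, val_mk])

def Cons (Γ Δ : Set L) : Prop :=
  ¬ ((Γ ⊆ {mk 0, mk 2} ∧ Δ ⊆ {mk 1}) ∨ (Γ ⊆ {mk 1, mk 2} ∧ Δ ⊆ {mk 0}))

lemma subst_eq (σ : Empty → L) (F : L) : Formula.subst σ F = F := by
  cases F with
  | atom e => exact e.elim
  | conn c Fs =>
    show Formula.conn c _ = Formula.conn c Fs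
    exact congrArg (Formula.conn c) (funext fun i => i.elim0)

lemma substInv : SubstInvariant Cons := by
  intro σ Γ Δ h
  have hi : ∀ S : Set L, Formula.subst σ '' S = S := by
    intro S
    ext x
    constructor
    · rintro ⟨y, hy, rfl⟩; rwa [subst_eq]
    · intro hx; exact ⟨x, hx, subst_eq σ x⟩
  rwa [hi, hi]

lemma mono : Monotonic Cons := by
  intro Γ₁ Γ₂ Δ₁ Δ₂ hΓ hΔ h hc
  apply h
  rcases hc with ⟨h1, h2⟩ | ⟨h1, h2⟩
  · exact Or.inl ⟨hΓ.trans h1, hΔ.trans h2⟩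
  · exact Or.inr ⟨hΓ.trans h1, hΔ.trans h2⟩

lemma refl : ReflRel Cons := by
  intro F hc
  rcases hc with ⟨h1, h2⟩ | ⟨h1, h2⟩
  · have e1 := h2 (Set.mem_singleton F)
    rw [Set.mem_singleton_iff] at e1
    have e2 := h1 (Set.mem_singleton F)
    rw [e1] at e2
    rcases e2 with e2 | e2
    · exact mk_ne (by decide) e2.symm
    · exact mk_ne (by decide) (Set.mem_singleton_iff.mp e2).symm
  · have e1 := h2 (Set.mem_singleton F)
    rw [Set.mem_singleton_iff] at e1
    have e2 := h1 (Set.mem_singleton F)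
    rw [e1] at e2
    rcases e2 with e2 | e2
    · exact mk_ne (by decide) e2.symm
    · exact mk_ne (by decide) (Set.mem_singleton_iff.mp e2).symm

lemma univ02 : ({mk 0, mk 2} : Set L) ∪ {mk 1} = Set.univ := by
  ext F
  simp only [Set.mem_union, Set.mem_insert_iff, Set.mem_singleton_iff, Set.mem_univ, iff_true]
  have h := mk_val F
  rcases (by decide : ∀ c : Fin 3, c = 0 ∨ c = 1 ∨ c = 2) (val F) with h0 | h1 | h2
  · left; left; rw [← h, h0]
  · right; rw [← h, h1]
  · left; right; rw [← h, h2]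

lemma univ12 : ({mk 1, mk 2} : Set L) ∪ {mk 0} = Set.univ := by
  ext F
  simp only [Set.mem_union, Set.mem_insert_iff, Set.mem_singleton_iff, Set.mem_univ, iff_true]
  have h := mk_val F
  rcases (by decide : ∀ c : Fin 3, c = 0 ∨ c = 1 ∨ c = 2) (val F) with h0 | h1 | h2
  · right; rw [← h, h0]
  · left; left; rw [← h, h1]
  · left; right; rw [← h, h2]

lemma notCons1 : ¬ Cons {mk 0, mk 2} {mk 1} := fun h => h (Or.inl ⟨le_refl _, le_refl _⟩)

lemma notCons2 : ¬ Cons {mk 1, mk 2} {mk 0} := fun h => h (Or.inr ⟨le_refl _, le_refl _⟩)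

lemma trans : TransRel Cons := by
  intro Γ Δ h
  rw [Cons, not_not] at h
  rcases h with ⟨h1, h2⟩ | ⟨h1, h2⟩
  · exact ⟨{mk 0, mk 2}, {mk 1}, h1, h2, notCons1, univ02⟩
  · exact ⟨{mk 1, mk 2}, {mk 0}, h1, h2, notCons2, univ12⟩

-- singleton-membership helpers for Cons of explicit generator-adjacent pairs
lemma cons_gen1 (d : Fin 3) (hd : d = 0 ∨ d = 2) : Cons {mk 0, mk 2} {mk d} := by
  intro hc
  rcases hc with ⟨_, h2⟩ | ⟨h1, _⟩
  · have := h2 (Set.mem_singleton _)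
    rw [Set.mem_singleton_iff] at this
    rcases hd with rfl | rfl
    · exact mk_ne (by decide) this
    · exact mk_ne (by decide) this
  · have := h1 (Or.inl rfl)
    rcases this with e | e
    · exact mk_ne (by decide) e
    · exact mk_ne (by decide) (Set.mem_singleton_iff.mp e)

lemma cons_gen2 (d : Fin 3) (hd : d = 1 ∨ d = 2) : Cons {mk 1, mk 2} {mk d} := by
  intro hc
  rcases hc with ⟨h1, _⟩ | ⟨_, h2⟩
  · have := h1 (Or.inl rfl)
    rcases this with e | e
    · exact mk_ne (by decide) e
    · exact mk_ne (by decide) (Set.mem_singleton_iff.mp e)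
  · have := h2 (Set.mem_singleton _)
    rw [Set.mem_singleton_iff] at this
    rcases hd with rfl | rfl
    · exact mk_ne (by decide) this
    · exact mk_ne (by decide) this

end S14

namespace S14

def DD : Fin 2 → Set (Fin 3) := fun l => if l = 0 then {0, 2} else {1, 2}

lemma DD0 : DD 0 = ({0, 2} : Set (Fin 3)) := if_pos rfl

lemma DD1 : DD 1 = ({1, 2} : Set (Fin 3)) := if_neg (by decide)

end S14

/-- there is a substitution-invariant, monotonic, reflexive and
transitive logic with no truth-adequate intersective mixed semantics over any
2-element set of truth values, although one exists over 3 truth values. -/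
theorem statement_14 :
    ∃ (A C : Type) (ar : C → ℕ)
      (Cons : Set (Formula A C ar) → Set (Formula A C ar) → Prop),
      SubstInvariant Cons ∧ Monotonic Cons ∧ ReflRel Cons ∧ TransRel Cons ∧
      (∀ (V : Type v) (_ : Fintype V), Fintype.card V = 2 →
        ∀ (W : Type w) (Λ : Type x) (interp : Formula A C ar → W → V)
          (tf : (c : C) → (Fin (ar c) → V) → V) (Dp Dc : Λ → Set V),
          ¬ (IsIMS Cons interp Dp Dc ∧ Compositional interp tf)) ∧
      (∃ (V : Type) (_ : Fintype V), Fintype.card V = 3 ∧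
        ∃ (W Λ : Type) (interp : Formula A C ar → W → V)
          (tf : (c : C) → (Fin (ar c) → V) → V) (Dp Dc : Λ → Set V),
          IsIMS Cons interp Dp Dc ∧ Compositional interp tf) := by
    classical
  refine ⟨Empty, Fin 3, S14.ar3, S14.Cons, S14.substInv, S14.mono, S14.refl, S14.trans, ?_, ?_⟩
  · -- no 2-valued truth-adequate IMS
    rintro V instV hcard W Λ interp tf Dp Dc ⟨hims, hcomp⟩
    set vF : Fin 3 → V := fun c => tf c (fun i => i.elim0) with hvFdef
    have hval : ∀ (c : Fin 3) (w : W), interp (S14.mk c) w = vF c := by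
      intro c w
      have h := hcomp c (fun i => i.elim0) w
      exact h.trans (congrArg (tf c) (funext fun i => i.elim0))
    -- first witness
    have h1 := mt (hims {S14.mk 0, S14.mk 2} {S14.mk 1}).mpr S14.notCons1
    simp only [Mixed, not_forall] at h1
    obtain ⟨w1, l1, hp1, hc1⟩ := h1
    have hb1 : vF 1 ∉ Dc l1 := fun hin =>
      hc1 ⟨vF 1, ⟨S14.mk 1, Set.mem_singleton _, hval 1 w1⟩, hin⟩
    have key1 : ∀ d : Fin 3, (d = 0 ∨ d = 2) → vF d ∈ Dc l1 := by
      intro d hd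
      have hM := (hims {S14.mk 0, S14.mk 2} {S14.mk d}).mp (S14.cons_gen1 d hd) w1 l1
      obtain ⟨x, hx1, hx2⟩ := hM hp1
      obtain ⟨F, hF, hFx⟩ := hx1
      rw [Set.mem_singleton_iff] at hF
      subst hF
      have hxv : x = vF d := hFx.symm.trans (hval d w1)
      rwa [← hxv]
    -- second witness
    have h2 := mt (hims {S14.mk 1, S14.mk 2} {S14.mk 0}).mpr S14.notCons2
    simp only [Mixed, not_forall] at h2
    obtain ⟨w2, l2, hp2, hc2⟩ := h2
    have hb2 : vF 0 ∉ Dc l2 := fun hin =>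
      hc2 ⟨vF 0, ⟨S14.mk 0, Set.mem_singleton _, hval 0 w2⟩, hin⟩
    have key2 : ∀ d : Fin 3, (d = 1 ∨ d = 2) → vF d ∈ Dc l2 := by
      intro d hd
      have hM := (hims {S14.mk 1, S14.mk 2} {S14.mk d}).mp (S14.cons_gen2 d hd) w2 l2
      obtain ⟨x, hx1, hx2⟩ := hM hp2
      obtain ⟨F, hF, hFx⟩ := hx1
      rw [Set.mem_singleton_iff] at hF
      subst hF
      have hxv : x = vF d := hFx.symm.trans (hval d w2)
      rwa [← hxv]
    have d01 : vF 0 ≠ vF 1 := fun e => hb1 (e ▸ key1 0 (Or.inl rfl))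
    have d21 : vF 2 ≠ vF 1 := fun e => hb1 (e ▸ key1 2 (Or.inr rfl))
    have d02 : vF 0 ≠ vF 2 := fun e => hb2 (e ▸ key2 2 (Or.inr rfl))
    have hlt : 2 < Fintype.card V :=
      Fintype.two_lt_card_iff.mpr ⟨vF 0, vF 1, vF 2, d01, d02, d21.symm⟩
    omega
  · -- 3-valued truth-adequate IMS
    refine ⟨Fin 3, inferInstance, by simp, Unit, Fin 2,
      fun F _ => S14.val F, fun c _ => c, S14.DD, S14.DD, ?_, fun c Fs w => rfl⟩
    intro Γ Δ
    constructor
    · intro hC w l hsub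
      by_contra hemp
      apply hC
      rcases (by decide : ∀ x : Fin 2, x = 0 ∨ x = 1) l with rfl | rfl
      · left
        constructor
        · intro F hF
          have hv : S14.val F ∈ S14.DD 0 := hsub ⟨F, hF, rfl⟩
          rw [S14.DD0] at hv
          rcases Set.mem_insert_iff.mp hv with hv | hv
          · exact Or.inl (by rw [← S14.mk_val F, hv])
          · rw [Set.mem_singleton_iff] at hv
            exact Or.inr (by rw [← S14.mk_val F, hv]; rfl)
        · intro F hF
          have hnv : S14.val F ∉ S14.DD 0 := fun hin =>
            hemp ⟨S14.val F, ⟨F, hF, rfl⟩, hin⟩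
          rw [S14.DD0] at hnv
          rcases (by decide : ∀ c : Fin 3, c = 0 ∨ c = 1 ∨ c = 2) (S14.val F) with h | h | h
          · exact absurd (by rw [h]; exact Set.mem_insert _ _) hnv
          · show F ∈ ({S14.mk 1} : Set S14.L)
            rw [Set.mem_singleton_iff, ← S14.mk_val F, h]
          · exact absurd (by rw [h]; exact Set.mem_insert_iff.mpr (Or.inr rfl)) hnv
      · right
        constructor
        · intro F hF
          have hv : S14.val F ∈ S14.DD 1 := hsub ⟨F, hF, rfl⟩
          rw [S14.DD1] at hv
          rcases Set.mem_insert_iff.mp hv with hv | hv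
          · exact Or.inl (by rw [← S14.mk_val F, hv])
          · rw [Set.mem_singleton_iff] at hv
            exact Or.inr (by rw [← S14.mk_val F, hv]; rfl)
        · intro F hF
          have hnv : S14.val F ∉ S14.DD 1 := fun hin =>
            hemp ⟨S14.val F, ⟨F, hF, rfl⟩, hin⟩
          rw [S14.DD1] at hnv
          rcases (by decide : ∀ c : Fin 3, c = 0 ∨ c = 1 ∨ c = 2) (S14.val F) with h | h | h
          · show F ∈ ({S14.mk 0} : Set S14.L)
            rw [Set.mem_singleton_iff, ← S14.mk_val F, h]
          · exact absurd (by rw [h]; exact Set.mem_insert _ _) hnv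
          · exact absurd (by rw [h]; exact Set.mem_insert_iff.mpr (Or.inr rfl)) hnv
    · intro h hd
      rcases hd with ⟨h1, h2⟩ | ⟨h1, h2⟩
      · have hM := h () 0
        have hsub : (fun F => S14.val F) '' Γ ⊆ S14.DD 0 := by
          rintro x ⟨F, hF, rfl⟩
          rw [S14.DD0]
          rcases Set.mem_insert_iff.mp (h1 hF) with rfl | hv
          · exact Set.mem_insert _ _
          · rw [Set.mem_singleton_iff] at hv
            rw [hv]
            exact Set.mem_insert_iff.mpr (Or.inr rfl)
        obtain ⟨x, hx1, hx2⟩ := hM hsub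
        obtain ⟨F, hF, rfl⟩ := hx1
        have : F = S14.mk 1 := Set.mem_singleton_iff.mp (h2 hF)
        subst this
        rw [S14.DD0] at hx2
        simp only [Set.mem_insert_iff, Set.mem_singleton_iff] at hx2
        rcases hx2 with e | e <;> exact absurd e (by decide)
      · have hM := h () 1
        have hsub : (fun F => S14.val F) '' Γ ⊆ S14.DD 1 := by
          rintro x ⟨F, hF, rfl⟩
          rw [S14.DD1]
          rcases Set.mem_insert_iff.mp (h1 hF) with rfl | hv
          · exact Set.mem_insert _ _
          · rw [Set.mem_singleton_iff] at hv
            rw [hv]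
            exact Set.mem_insert_iff.mpr (Or.inr rfl)
        obtain ⟨x, hx1, hx2⟩ := hM hsub
        obtain ⟨F, hF, rfl⟩ := hx1
        have : F = S14.mk 0 := Set.mem_singleton_iff.mp (h2 hF)
        subst this
        rw [S14.DD1] at hx2
        simp only [Set.mem_insert_iff, Set.mem_singleton_iff] at hx2
        rcases hx2 with e | e <;> exact absurd e (by decide)
end

section
/- For every natural number n ≥ 1 there exists a sentential language and a substitution-invariant, monotonic, reflexive and transitive consequence relation ⊢ on it such that every truth-adequate intersective mixed semantics for ⊢ uses at least n truth values; hence the truth-functional rank of a monotonic logic can be any n (it is unbounded). -/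
universe u v w x

/-- The `j`-th constant formula. -/
def Kc (n : ℕ) (j : Fin n) : Formula Empty (Fin n) (fun _ => 0) :=
  Formula.conn j (fun x => x.elim0)

lemma Kc_injective (n : ℕ) : Function.Injective (Kc n) := by
  intro i j h
  simpa [Kc] using h

lemma subst_id (n : ℕ) (σ : Empty → Formula Empty (Fin n) (fun _ => 0)) :
    ∀ F : Formula Empty (Fin n) (fun _ => 0), F.subst σ = F := by
  intro F
  induction F with
  | atom a => exact a.elim
  | conn c Fs ih =>
    simp only [Formula.subst]
    congr 1
    funext i
    exact i.elim0

/-- for every n ≥ 1 there is a substitution-invariant, monotonic,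
reflexive and transitive logic such that every truth-adequate intersective
mixed semantics for it uses at least n truth values. -/
theorem statement_15 (n : ℕ) (hn : 1 ≤ n) :
    ∃ (A C : Type) (ar : C → ℕ)
      (Cons : Set (Formula A C ar) → Set (Formula A C ar) → Prop),
      SubstInvariant Cons ∧ Monotonic Cons ∧ ReflRel Cons ∧ TransRel Cons ∧
      ∀ (V : Type v) (W : Type w) (Λ : Type x)
        (interp : Formula A C ar → W → V)
        (tf : (c : C) → (Fin (ar c) → V) → V) (Dp Dc : Λ → Set V),
        IsIMS Cons interp Dp Dc → Compositional interp tf →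
        (n : Cardinal) ≤ Cardinal.mk V := by
  refine ⟨Empty, Fin n, fun _ => 0,
    fun Γ Δ => ¬ ∃ j : Fin n, Δ ⊆ {Kc n j} ∧ Kc n j ∉ Γ, ?_, ?_, ?_, ?_, ?_⟩
  · -- SubstInvariant
    intro σ Γ Δ h
    have himg : ∀ S : Set (Formula Empty (Fin n) (fun _ => 0)),
        Formula.subst σ '' S = S := by
      intro S
      have : Formula.subst σ = id := funext (subst_id n σ)
      simp [this]
    rw [himg, himg]
    exact h
  · -- Monotonic
    intro Γ₁ Γ₂ Δ₁ Δ₂ hΓ hΔ h hc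
    exact h ⟨hc.choose, hΔ.trans hc.choose_spec.1, fun hm => hc.choose_spec.2 (hΓ hm)⟩
  · -- ReflRel
    intro F hc
    obtain ⟨j, h1, h2⟩ := hc
    exact h2 (h1 rfl).symm
  · -- TransRel
    intro Γ Δ h
    rw [not_not] at h
    obtain ⟨j, h1, h2⟩ := h
    refine ⟨Set.univ \ {Kc n j}, {Kc n j}, fun F hF => ⟨trivial, by
      simp only [Set.mem_singleton_iff]; rintro rfl; exact h2 hF⟩, h1, ?_, ?_⟩
    · rw [not_not]
      exact ⟨j, Set.Subset.rfl, fun hm => hm.2 rfl⟩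
    · ext F
      simp [em]
  · -- cardinality
    intro V W Λ interp tf Dp Dc hims hcomp
    set v : Fin n → V := fun i => tf i (fun x => x.elim0) with hv
    have hval : ∀ (i : Fin n) (w : W), interp (Kc n i) w = v i := by
      intro i w
      rw [Kc, hcomp i (fun x => x.elim0) w]
      congr 1
      funext x
      exact x.elim0
    have hinj : Function.Injective v := by
      intro i j hij
      by_contra hne
      have hrefl : ¬ ∃ j' : Fin n, ({Kc n i} : Set _) ⊆ {Kc n j'} ∧ Kc n j' ∉ ({Kc n i} : Set _) := by
        rintro ⟨j', h1, h2⟩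
        exact h2 (h1 rfl).symm
      have hcons : ¬ ∃ j' : Fin n, ({Kc n j} : Set _) ⊆ {Kc n j'} ∧ Kc n j' ∉ ({Kc n i} : Set _) :=
        (hims {Kc n i} {Kc n j}).mpr (by
          intro w l
          have := (hims {Kc n i} {Kc n i}).mp hrefl w l
          simpa [Mixed, hval, hij] using this)
      exact hcons ⟨j, Set.Subset.rfl, by
        simp only [Set.mem_singleton_iff]
        intro h
        exact hne (Kc_injective n h.symm)⟩
    have hinj' : Function.Injective (fun i : ULift.{v} (Fin n) => v i.down) := by
      intro a b hab
      exact ULift.ext _ _ (hinj hab)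
    have := Cardinal.mk_le_of_injective hinj'
    simpa using this
end

section
/- If ⊢ is a regular and compact consequence relation on a sentential language that has a sound and complete intersective mixed semantics, then ⊢ has a truth-adequate mixed semantics over the four-element set of truth values {1, #_p, #_c, 0}, with the single pair D_p = {1, #_p} and D_c = {1, #_c}: i.e. a sound and complete mixed semantics in which every connective is interpreted by a truth-function. -/
universe u v w x

/-
Worlds are the maximal non-consequences: pairs `(Γ, Δ)` with `Γ ⊬ Δ` that cannot be enlarged
on either side.  Monotonicity is inherited from the intersective semantics; together with
compactness it makes the non-consequences a family of finite character, so by Teichmüller–Tukey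
every non-consequence extends to such a world.  A formula takes one of four values according to
whether it lies in `Γ` and whether it lies in `Δ`.  In a maximal world, `Γ ∪ S ⊬ T ∪ Δ` holds
exactly when `S ⊆ Γ` and `T ⊆ Δ`, so the regularity clauses for `c(F₁, …, Fₙ)` become
conditions on the memberships of the `Fᵢ`, i.e. on their values.
-/

theorem mixed_image_iff_s16 {L V : Type*} {Dp Dc : Set V} {f : L → V} {Γ Δ : Set L} :
    Mixed Dp Dc (f '' Γ) (f '' Δ) ↔ ((∀ F ∈ Γ, f F ∈ Dp) → ∃ F ∈ Δ, f F ∈ Dc) := by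
  simp [Mixed, Set.subset_def, Set.Nonempty]

open Classical in
/-- The truth values `1, #_p, #_c, 0` are encoded as `1, 2, 3, 0`. -/
noncomputable def fourVal (a b : Prop) : Fin 4 :=
  if a then (if b then 2 else 1) else (if b then 0 else 3)

theorem fourVal_mem_Dp {a b : Prop} : fourVal a b ∈ ({1, 2} : Set (Fin 4)) ↔ a := by
  by_cases a <;> by_cases b <;> simp [fourVal, *]

theorem fourVal_mem_Dc {a b : Prop} : fourVal a b ∈ ({1, 3} : Set (Fin 4)) ↔ ¬ b := by
  by_cases a <;> by_cases b <;> simp [fourVal, *]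

@[simp]
theorem Set.preimage_inl_image_inl {α β : Type*} (s : Set α) :
    Sum.inl ⁻¹' (Sum.inl '' s : Set (α ⊕ β)) = s :=
  Sum.inl_injective.preimage_image s

@[simp]
theorem Set.preimage_inr_image_inr {α β : Type*} (s : Set β) :
    Sum.inr ⁻¹' (Sum.inr '' s : Set (α ⊕ β)) = s :=
  Sum.inr_injective.preimage_image s

section CanonicalSemantics

variable {L : Type*} {Cons : Set L → Set L → Prop}

variable (Cons) in
/-- A set of signed formulae encodes a pair of sets: `inl F` marks `F` as a premise and
`inr F` as a conclusion. -/
def Underivable : Set (Set (L ⊕ L)) :=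
  {w | ¬ Cons (Sum.inl ⁻¹' w) (Sum.inr ⁻¹' w)}

theorem isOfFiniteCharacter_underivable (hmono : Monotonic Cons) (hcomp : CompactRel Cons) :
    Order.IsOfFiniteCharacter (Underivable Cons) := by
  intro w
  refine ⟨fun hw y hy _ hc => hw (hmono (Set.preimage_mono hy) (Set.preimage_mono hy) hc),
    fun hfin hc => ?_⟩
  obtain ⟨Γ, Δ, hΓ, hΔ, hΓfin, hΔfin, hc'⟩ := hcomp _ _ hc
  refine hfin (Sum.inl '' Γ ∪ Sum.inr '' Δ)
    (Set.union_subset (Set.image_subset_iff.2 hΓ) (Set.image_subset_iff.2 hΔ))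
    ((hΓfin.image _).union (hΔfin.image _)) ?_
  simpa [Underivable] using hc'

theorem exists_maximal_underivable (hmono : Monotonic Cons) (hcomp : CompactRel Cons)
    {Γ Δ : Set L} (h : ¬ Cons Γ Δ) :
    ∃ w, Γ ⊆ Sum.inl ⁻¹' w ∧ Δ ⊆ Sum.inr ⁻¹' w ∧ Maximal (· ∈ Underivable Cons) w := by
  have hΓΔ : Sum.inl '' Γ ∪ Sum.inr '' Δ ∈ Underivable Cons := by
    simpa [Underivable] using h
  obtain ⟨w, hsub, hw⟩ := (isOfFiniteCharacter_underivable hmono hcomp).exists_maximal hΓΔ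
  exact ⟨w, Set.image_subset_iff.1 (Set.union_subset_iff.1 hsub).1,
    Set.image_subset_iff.1 (Set.union_subset_iff.1 hsub).2, hw⟩

theorem not_cons_union_iff {w : Set (L ⊕ L)} (hw : Maximal (· ∈ Underivable Cons) w)
    {S T : Set L} :
    ¬ Cons (Sum.inl ⁻¹' w ∪ S) (T ∪ Sum.inr ⁻¹' w) ↔
      S ⊆ Sum.inl ⁻¹' w ∧ T ⊆ Sum.inr ⁻¹' w := by
  refine ⟨fun h => ?_, fun ⟨hS, hT⟩ => ?_⟩
  · have hw' : w = w ∪ Sum.inl '' S ∪ Sum.inr '' T := hw.eq_of_subset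
      (by simpa [Underivable, Set.union_comm T] using h)
      (Set.subset_union_left.trans Set.subset_union_left)
    rw [hw']
    exact ⟨fun F hF => Or.inl (Or.inr ⟨F, hF, rfl⟩), fun F hF => Or.inr ⟨F, hF, rfl⟩⟩
  · rw [Set.union_eq_self_of_subset_right hS, Set.union_eq_self_of_subset_left hT]
    exact hw.1

theorem inl_mem_iff {w : Set (L ⊕ L)} (hw : Maximal (· ∈ Underivable Cons) w) {F : L} :
    Sum.inl F ∈ w ↔ ¬ Cons (Sum.inl ⁻¹' w ∪ {F}) (Sum.inr ⁻¹' w) := by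
  simpa using (not_cons_union_iff hw (S := {F}) (T := ∅)).symm

theorem inr_mem_iff {w : Set (L ⊕ L)} (hw : Maximal (· ∈ Underivable Cons) w) {F : L} :
    Sum.inr F ∈ w ↔ ¬ Cons (Sum.inl ⁻¹' w) ({F} ∪ Sum.inr ⁻¹' w) := by
  simpa using (not_cons_union_iff hw (S := ∅) (T := {F})).symm

variable (Cons) in
noncomputable def canonicalInterp (F : L) (w : {w // Maximal (· ∈ Underivable Cons) w}) :
    Fin 4 :=
  fourVal (Sum.inl F ∈ w.1) (Sum.inr F ∈ w.1)

theorem isMixedSem_canonicalInterp (hmono : Monotonic Cons) (hcomp : CompactRel Cons) :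
    IsMixedSem Cons (canonicalInterp Cons) {1, 2} {1, 3} := by
  intro Γ Δ
  simp only [mixed_image_iff_s16, canonicalInterp, fourVal_mem_Dp, fourVal_mem_Dc]
  refine ⟨fun hc w hΓ => ?_, fun h => ?_⟩
  · by_contra! hΔ
    exact w.2.1 (hmono hΓ hΔ hc)
  · by_contra hc
    obtain ⟨w, hΓ, hΔ, hw⟩ := exists_maximal_underivable hmono hcomp hc
    obtain ⟨F, hF, hFΔ⟩ := h ⟨w, hw⟩ hΓ
    exact hFΔ (hΔ hF)

end CanonicalSemantics

theorem exists_compositional_canonicalInterp {A C : Type u} {ar : C → ℕ}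
    {Cons : Set (Formula A C ar) → Set (Formula A C ar) → Prop} (hreg : RegularRel Cons) :
    ∃ tf, Compositional (canonicalInterp Cons) tf := by
  choose Bp Bc hB using hreg
  let holdsIn (c : C) (v : Fin (ar c) → Fin 4) (B : Set (Fin (ar c)) × Set (Fin (ar c))) :=
    (∀ i ∈ B.1, v i ∈ ({1, 2} : Set (Fin 4))) ∧ ∀ i ∈ B.2, v i ∉ ({1, 3} : Set (Fin 4))
  refine ⟨fun c v => fourVal (∃ B ∈ Bp c, holdsIn c v B) (∃ B ∈ Bc c, holdsIn c v B),
    fun c Fs w => ?_⟩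
  have hholds (B : Set (Fin (ar c)) × Set (Fin (ar c))) :
      ¬ Cons (Sum.inl ⁻¹' w.1 ∪ Fs '' B.1) (Fs '' B.2 ∪ Sum.inr ⁻¹' w.1) ↔
        holdsIn c (fun i => canonicalInterp Cons (Fs i) w) B := by
    simp only [not_cons_union_iff w.2, Set.image_subset_iff, holdsIn, canonicalInterp,
      fourVal_mem_Dp, fourVal_mem_Dc, not_not]
    rfl
  refine congrArg₂ fourVal (propext ?_) (propext ?_)
  · rw [inl_mem_iff w.2, (hB c _ _ Fs).1]
    simp only [not_forall, exists_prop, hholds]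
  · rw [inr_mem_iff w.2, (hB c _ _ Fs).2]
    simp only [not_forall, exists_prop, hholds]

/-- a regular and compact consequence relation with a sound and
complete intersective mixed semantics has a truth-adequate mixed semantics over
the four-element set of truth values `{1, #_p, #_c, 0}` (encoded in `Fin 4` as
`1`, `2`, `3`, `0` respectively), with `D_p = {1, #_p}` and `D_c = {1, #_c}`. -/
theorem statement_16 {A C : Type u} (ar : C → ℕ)
    (Cons : Set (Formula A C ar) → Set (Formula A C ar) → Prop)
    (hreg : RegularRel Cons) (hcomp : CompactRel Cons)
    (hsem : ∃ (V W Λ : Type u) (interp : Formula A C ar → W → V)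
      (Dp Dc : Λ → Set V), IsIMS Cons interp Dp Dc) :
    ∃ (W : Type u) (interp : Formula A C ar → W → Fin 4)
      (tf : (c : C) → (Fin (ar c) → Fin 4) → Fin 4),
      IsMixedSem Cons interp ({1, 2} : Set (Fin 4)) ({1, 3} : Set (Fin 4)) ∧
      Compositional interp tf := by
  obtain ⟨_, _, _, _, _, _, hIMS⟩ := hsem
  obtain ⟨tf, htf⟩ := exists_compositional_canonicalInterp hreg
  exact ⟨_, canonicalInterp Cons, tf, isMixedSem_canonicalInterp hIMS.monotonic hcomp, htf⟩
end
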